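/- Let Σ(P), Σ(Q), Σ(R) be positive systems for Σ with P ⪰ R. The following are equivalent: (a) P ⪰ Q and Q ⪰ R; (b) Σ(P) ∩ (−Σ(Q)) ⊆ Σ(P) ∩ (−Σ(R)). -/
import Mathlib


/-- `P` is a positive system for the root set `S`: there is `X ∈ V` on which no root of `S`
vanishes, such that `P` is the set of roots of `S` that are positive on `X`. -/
def IsPosSystem {V : Type*} [AddCommGroup V] [Module ℝ V]
    (S P : Set (V →ₗ[ℝ] ℝ)) : Prop :=
  ∃ X : V, (∀ α ∈ S, α X ≠ 0) ∧ P = {α | α ∈ S ∧ 0 < α X}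

/-- `Σ(P, σ) = Σ(P) ∩ σ·Σ(P)`, where `σ` acts on functionals by `λ ↦ λ ∘ σ`. -/
def rootsSigma {V : Type*} [AddCommGroup V] [Module ℝ V]
    (σ : V →ₗ[ℝ] V) (P : Set (V →ₗ[ℝ] ℝ)) : Set (V →ₗ[ℝ] ℝ) :=
  P ∩ ((fun α => α.comp σ) '' P)

/-- `Σ(P, σθ) = Σ(P) ∩ σθ·Σ(P)`, where `σθ` acts on functionals by `λ ↦ -(λ ∘ σ)`. -/
def rootsSigmaTheta {V : Type*} [AddCommGroup V] [Module ℝ V]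
    (σ : V →ₗ[ℝ] V) (P : Set (V →ₗ[ℝ] ℝ)) : Set (V →ₗ[ℝ] ℝ) :=
  P ∩ ((fun α => -(α.comp σ)) '' P)

/-- The partial ordering `P ⪰ Q`: `Σ(Q,σθ) ⊆ Σ(P,σθ)` and `Σ(P,σ) ⊆ Σ(Q,σ)`. -/
def Dominates {V : Type*} [AddCommGroup V] [Module ℝ V]
    (σ : V →ₗ[ℝ] V) (P Q : Set (V →ₗ[ℝ] ℝ)) : Prop :=
  rootsSigmaTheta σ Q ⊆ rootsSigmaTheta σ P ∧ rootsSigma σ P ⊆ rootsSigma σ Q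

private lemma comp_invol {V : Type*} [AddCommGroup V] [Module ℝ V]
    (σ : V →ₗ[ℝ] V) (hσ : ∀ X, σ (σ X) = X) (β : V →ₗ[ℝ] ℝ) :
    (β.comp σ).comp σ = β := by
  ext x; simp [hσ]

private lemma mem_rootsSigma {V : Type*} [AddCommGroup V] [Module ℝ V]
    {σ : V →ₗ[ℝ] V} (hσ : ∀ X, σ (σ X) = X) {P : Set (V →ₗ[ℝ] ℝ)} {β : V →ₗ[ℝ] ℝ} :
    β ∈ rootsSigma σ P ↔ β ∈ P ∧ β.comp σ ∈ P := by
  constructor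
  · rintro ⟨h1, α, hα, rfl⟩
    exact ⟨h1, by rw [comp_invol σ hσ α]; exact hα⟩
  · rintro ⟨h1, h2⟩
    exact ⟨h1, ⟨β.comp σ, h2, comp_invol σ hσ β⟩⟩

private lemma mem_rootsSigmaTheta {V : Type*} [AddCommGroup V] [Module ℝ V]
    {σ : V →ₗ[ℝ] V} (hσ : ∀ X, σ (σ X) = X) {P : Set (V →ₗ[ℝ] ℝ)} {β : V →ₗ[ℝ] ℝ} :
    β ∈ rootsSigmaTheta σ P ↔ β ∈ P ∧ -(β.comp σ) ∈ P := by
  constructor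
  · rintro ⟨h1, α, hα, rfl⟩
    refine ⟨h1, ?_⟩
    have h : -((-(α.comp σ)).comp σ) = α := by ext x; simp [hσ]
    rw [h]; exact hα
  · rintro ⟨h1, h2⟩
    refine ⟨h1, ⟨-(β.comp σ), h2, ?_⟩⟩
    ext x; simp [hσ]

private lemma pos_neg_mem {V : Type*} [AddCommGroup V] [Module ℝ V]
    {S P : Set (V →ₗ[ℝ] ℝ)}
    (hSneg : ∀ α ∈ S, -α ∈ S) (hP : IsPosSystem S P) :
    P ⊆ S ∧ ∀ α ∈ S, (-α ∈ P ↔ α ∉ P) := by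
  obtain ⟨X, hX, rfl⟩ := hP
  refine ⟨fun α hα => hα.1, fun α hα => ?_⟩
  have hx := hX α hα
  simp only [Set.mem_setOf_eq, LinearMap.neg_apply, hα, hSneg α hα, true_and, not_and,
    neg_pos]
  constructor
  · intro h h'
    exact absurd h' (not_lt.2 h.le)
  · intro h
    rcases hx.lt_or_gt with h' | h'
    · exact h'
    · exact absurd h' h

/-- If `P ⪰ R`, then `P ⪰ Q ⪰ R` if and only if
`Σ(P) ∩ (−Σ(Q)) ⊆ Σ(P) ∩ (−Σ(R))`. -/
theorem dominates_squeeze_iff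
    {V : Type*} [AddCommGroup V] [Module ℝ V] [FiniteDimensional ℝ V]
    (σ : V →ₗ[ℝ] V) (hσ : ∀ X, σ (σ X) = X)
    (S : Set (V →ₗ[ℝ] ℝ)) (hSfin : S.Finite) (hS0 : (0 : V →ₗ[ℝ] ℝ) ∉ S)
    (hSneg : ∀ α ∈ S, -α ∈ S) (hSσ : ∀ α ∈ S, α.comp σ ∈ S)
    (P Q R : Set (V →ₗ[ℝ] ℝ))
    (hP : IsPosSystem S P) (hQ : IsPosSystem S Q) (hR : IsPosSystem S R)
    (hPR : Dominates σ P R) :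
    (Dominates σ P Q ∧ Dominates σ Q R) ↔
      P ∩ {α | -α ∈ Q} ⊆ P ∩ {α | -α ∈ R} := by
  classical
  obtain ⟨hPS, hPn⟩ := pos_neg_mem hSneg hP
  obtain ⟨hQS, hQn⟩ := pos_neg_mem hSneg hQ
  obtain ⟨hRS, hRn⟩ := pos_neg_mem hSneg hR
  have hPnot : ∀ α ∈ S, α ∉ P → -α ∈ P := fun α h h' => (hPn α h).2 h'
  have hPmem : ∀ α ∈ S, α ∈ P → -α ∉ P := fun α h h' h'' => (hPn α h).1 h'' h'
  have hQnot : ∀ α ∈ S, α ∉ Q → -α ∈ Q := fun α h h' => (hQn α h).2 h'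
  have hQmem : ∀ α ∈ S, α ∈ Q → -α ∉ Q := fun α h h' h'' => (hQn α h).1 h'' h'
  have hRnot : ∀ α ∈ S, α ∉ R → -α ∈ R := fun α h h' => (hRn α h).2 h'
  have hRmem : ∀ α ∈ S, α ∈ R → -α ∉ R := fun α h h' h'' => (hRn α h).1 h'' h'
  have hPof : ∀ α ∈ S, -α ∉ P → α ∈ P := by
    intro α h h'; by_contra hc; exact h' (hPnot α h hc)
  have hQof : ∀ α ∈ S, -α ∉ Q → α ∈ Q := by
    intro α h h'; by_contra hc; exact h' (hQnot α h hc)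
  have hRof : ∀ α ∈ S, -α ∉ R → α ∈ R := by
    intro α h h'; by_contra hc; exact h' (hRnot α h hc)
  -- Step 1: the right-hand side is equivalent to `P ∩ R ⊆ Q`.
  have hb_iff : (P ∩ {α | -α ∈ Q} ⊆ P ∩ {α | -α ∈ R}) ↔
      (∀ α, α ∈ P → α ∈ R → α ∈ Q) := by
    constructor
    · intro h α hαP hαR
      by_contra hαQ
      have hS' := hPS hαP
      have hmem : α ∈ P ∩ {α | -α ∈ Q} := ⟨hαP, hQnot α hS' hαQ⟩
      exact hRmem α hS' hαR (h hmem).2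
    · rintro h α ⟨hαP, hαQ⟩
      have hS' := hPS hαP
      refine ⟨hαP, ?_⟩
      have hnr : α ∉ R := fun hr => hQmem α hS' (h α hαP hr) hαQ
      exact hRnot α hS' hnr
  rw [hb_iff]
  have hPR1 : ∀ β, β ∈ R → -(β.comp σ) ∈ R → β ∈ P ∧ -(β.comp σ) ∈ P :=
    fun β h1 h2 => (mem_rootsSigmaTheta hσ).1 (hPR.1 ((mem_rootsSigmaTheta hσ).2 ⟨h1, h2⟩))
  have hPR2 : ∀ β, β ∈ P → β.comp σ ∈ P → β ∈ R ∧ β.comp σ ∈ R :=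
    fun β h1 h2 => (mem_rootsSigma hσ).1 (hPR.2 ((mem_rootsSigma hσ).2 ⟨h1, h2⟩))
  constructor
  · rintro ⟨hPQ, hQR⟩ α hαP hαR
    by_contra hαQ
    have hS' := hPS hαP
    have hnQ : -α ∈ Q := hQnot α hS' hαQ
    by_cases hc : α.comp σ ∈ Q
    · have hm : -α ∈ rootsSigmaTheta σ Q := by
        rw [mem_rootsSigmaTheta hσ]
        refine ⟨hnQ, ?_⟩
        rw [LinearMap.neg_comp, neg_neg]
        exact hc
      have hm' := hPQ.1 hm
      rw [mem_rootsSigmaTheta hσ] at hm'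
      exact hPmem α hS' hαP hm'.1
    · have hm : -α ∈ rootsSigma σ Q := by
        rw [mem_rootsSigma hσ]
        refine ⟨hnQ, ?_⟩
        rw [LinearMap.neg_comp]
        exact hQnot _ (hSσ α hS') hc
      have hm' := hQR.2 hm
      rw [mem_rootsSigma hσ] at hm'
      exact hRmem α hS' hαR hm'.1
  · intro hb
    have L1 : rootsSigma σ P ⊆ rootsSigma σ Q := by
      intro β hm
      rw [mem_rootsSigma hσ] at hm ⊢
      obtain ⟨h1, h2⟩ := hm
      obtain ⟨h3, h4⟩ := hPR2 β h1 h2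
      exact ⟨hb β h1 h3, hb _ h2 h4⟩
    have L2 : rootsSigmaTheta σ Q ⊆ rootsSigmaTheta σ P := by
      intro β hm
      rw [mem_rootsSigmaTheta hσ] at hm ⊢
      obtain ⟨hβQ, hnσβQ⟩ := hm
      have hβS : β ∈ S := hQS hβQ
      have hσβS : β.comp σ ∈ S := hSσ β hβS
      by_cases hβP : β ∈ P
      · by_cases hσβP : β.comp σ ∈ P
        · exfalso
          have hm' := L1 ((mem_rootsSigma hσ).2 ⟨hβP, hσβP⟩)
          rw [mem_rootsSigma hσ] at hm'
          exact hQmem _ hσβS hm'.2 hnσβQ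
        · exact ⟨hβP, hPnot _ hσβS hσβP⟩
      · exfalso
        have hnβP : -β ∈ P := hPnot β hβS hβP
        by_cases hA : -(β.comp σ) ∈ P
        · have hm2 := hPR2 (-β) hnβP (by rw [LinearMap.neg_comp]; exact hA)
          exact hQmem β hβS hβQ (hb (-β) hnβP hm2.1)
        · have hσβP : β.comp σ ∈ P := hPof _ hσβS hA
          have hσβR : β.comp σ ∉ R := fun hr => hQmem _ hσβS (hb _ hσβP hr) hnσβQ
          have hβR : β ∈ R := hRof β hβS (fun hr => hQmem β hβS hβQ (hb (-β) hnβP hr))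
          exact hβP (hPR1 β hβR (hRnot _ hσβS hσβR)).1
    have key : ∀ β, β ∈ Q → β.comp σ ∈ Q → β ∈ R := by
      intro β h1 h2
      have hβS : β ∈ S := hQS h1
      have hσβS : β.comp σ ∈ S := hSσ β hβS
      by_contra hβR
      have hnβR : -β ∈ R := hRnot β hβS hβR
      by_cases hc : -β ∈ P
      · exact hQmem β hβS h1 (hb (-β) hc hnβR)
      · have hβP : β ∈ P := hPof β hβS hc
        have hσβP : β.comp σ ∉ P := fun hp => hβR (hPR2 β hβP hp).1
        have hnσβP : -(β.comp σ) ∈ P := hPnot _ hσβS hσβP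
        by_cases hd : β.comp σ ∈ R
        · have hm := hPR1 (-β) hnβR (by rw [LinearMap.neg_comp, neg_neg]; exact hd)
          exact hPmem β hβS hβP hm.1
        · have hnσβR : -(β.comp σ) ∈ R := hRnot _ hσβS hd
          exact hQmem _ hσβS h2 (hb _ hnσβP hnσβR)
    have L3 : rootsSigma σ Q ⊆ rootsSigma σ R := by
      intro β hm
      rw [mem_rootsSigma hσ] at hm ⊢
      obtain ⟨h1, h2⟩ := hm
      refine ⟨key β h1 h2, key _ h2 ?_⟩
      rw [comp_invol σ hσ]
      exact h1
    have L4 : rootsSigmaTheta σ R ⊆ rootsSigmaTheta σ Q := by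
      intro β hm
      rw [mem_rootsSigmaTheta hσ] at hm ⊢
      obtain ⟨h1, h2⟩ := hm
      obtain ⟨h3, h4⟩ := hPR1 β h1 h2
      have hβS := hRS h1
      have hσβS := hSσ β hβS
      refine ⟨hb β h3 h1, ?_⟩
      by_contra hc
      have hσβQ : β.comp σ ∈ Q := hQof _ hσβS hc
      have hr : β.comp σ ∈ R := key _ hσβQ (by rw [comp_invol σ hσ]; exact hb β h3 h1)
      exact hRmem _ hσβS hr h2
    exact ⟨⟨L2, L1⟩, ⟨L4, L3⟩⟩
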